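/- Let λ be a finite non-increasing sequence of real numbers, viewed as the multiset {λ₁^{r(λ₁)}, …, λ_s^{r(λ_s)}} where λ₁ > ⋯ > λ_s and r(λ_i) denotes the multiplicity of λ_i. Then the shape 𝔭(λ) of the Young tableau obtained by Robinson–Schensted row insertion of λ is the partition [r₁, …, r_s] obtained by sorting the multiplicities r(λ₁), …, r(λ_s) in non-increasing order. -/

import Mathlib

noncomputable section
open scoped Classical

namespace PaperStmt

/-- Row insertion: insert `x` into a (weakly increasing) row, returning the new row
and the bumped entry (if any): the leftmost entry strictly greater than `x` is bumped. -/
def rowInsert (x : ℝ) : List ℝ → List ℝ × Option ℝ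
  | [] => ([x], none)
  | y :: ys =>
    if x < y then (x :: ys, some y)
    else
      let p := rowInsert x ys
      (y :: p.1, p.2)

/-- Insert an entry into a tableau (list of rows) by Robinson–Schensted row insertion. -/
def insertT : List (List ℝ) → ℝ → List (List ℝ)
  | [], x => [[x]]
  | row :: rest, x =>
    match rowInsert x row with
    | (r, none) => r :: rest
    | (r, some y) => r :: insertT rest y

/-- The Robinson–Schensted insertion tableau `P(λ)` of a sequence. -/
def RS (l : List ℝ) : List (List ℝ) := l.foldl insertT []

/-- The shape `𝔭(λ)` of the Robinson–Schensted insertion tableau: the list of row lengths. -/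
def RSshape (l : List ℝ) : List ℕ := (RS l).map List.length

/-- The parts of a multiset of naturals sorted in non-increasing order. -/
def sortDesc (p : Multiset ℕ) : List ℕ := (p.sort (· ≤ ·)).reverse

/-!
For a non-increasing `λ`, each new entry `x` is at most every entry of the current tableau, so row
insertion puts it on top of the first column not containing `x`, and the bumped entries slide down
that column. Inductively, column `k` of `P(λ)` consists of the values occurring more than `k`
times in `λ`. If `x` already occurs `m` times, the new cell is the bottom of column `m`, in row
`#{v | r(v) > m}`; on the sorted multiplicities this is the effect of replacing one part `m` by
`m + 1`.
-/

-- Heights of columns weakly decrease, so below the first row they stop at the first column of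
-- height one.
def dropFirstRow : List (List ℝ) → List (List ℝ)
  | [] => []
  | c :: C => if c.tail = [] then [] else c.tail :: dropFirstRow C

/-- `T` lists the rows of the tableau whose columns, read from top to bottom, are `C`. -/
inductive HasColumns : List (List ℝ) → List (List ℝ) → Prop
  | nil : HasColumns [] []
  | cons {T C : List (List ℝ)} (hC : C ≠ []) (h : HasColumns T (dropFirstRow C)) :
      HasColumns (C.map List.headI :: T) C

structure NestedColumns (C : List (List ℝ)) : Prop where
  ne_nil : ∀ c ∈ C, c ≠ []
  sorted : ∀ c ∈ C, c.Pairwise (· < ·)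
  subset : C.Pairwise fun a b => b ⊆ a

def addCell : List ℕ → ℕ → List ℕ
  | [], _ => [1]
  | a :: s, 0 => (a + 1) :: s
  | a :: s, j + 1 => a :: addCell s j

lemma headI_mem {α : Type*} [Inhabited α] {c : List α} (h : c ≠ []) : c.headI ∈ c := by
  cases c with
  | nil => contradiction
  | cons a t => exact List.mem_cons_self

section SortedList

variable {α : Type*} [Preorder α] [Inhabited α] {c : List α} {v : α}

lemma headI_le_of_mem (hs : c.Pairwise (· < ·)) (hv : v ∈ c) : c.headI ≤ v := by
  cases c with
  | nil => simp at hv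
  | cons a t =>
    rcases List.mem_cons.1 hv with rfl | h
    · exact le_rfl
    · exact ((List.pairwise_cons.1 hs).1 v h).le

lemma headI_lt_of_mem_tail (hs : c.Pairwise (· < ·)) (hv : v ∈ c.tail) : c.headI < v := by
  cases c with
  | nil => simp at hv
  | cons a t => exact (List.pairwise_cons.1 hs).1 v hv

lemma mem_tail_of_headI_lt (hv : v ∈ c) (hlt : c.headI < v) : v ∈ c.tail := by
  cases c with
  | nil => simp at hv
  | cons a t =>
    rcases List.mem_cons.1 hv with rfl | h
    · exact absurd hlt (lt_irrefl v)
    · exact h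

lemma tail_subset_tail {e : List α} (hc : c.Pairwise (· < ·)) (he : e.Pairwise (· < ·))
    (hsub : e ⊆ c) (hne : e ≠ []) : e.tail ⊆ c.tail := fun _ hv =>
  mem_tail_of_headI_lt (hsub (List.mem_of_mem_tail hv))
    ((headI_le_of_mem hc (hsub (headI_mem hne))).trans_lt (headI_lt_of_mem_tail he hv))

end SortedList

lemma rowInsert_of_forall_le {y : ℝ} {r : List ℝ} (h : ∀ a ∈ r, a ≤ y) :
    rowInsert y r = (r ++ [y], none) := by
  induction r with
  | nil => rfl
  | cons a t ih =>
    rw [List.forall_mem_cons] at h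
    simp only [rowInsert, if_neg (not_lt.2 h.1), ih h.2, List.cons_append]

lemma rowInsert_append_cons {y b : ℝ} (hb : y < b) {r₁ : List ℝ} (r₂ : List ℝ)
    (h : ∀ a ∈ r₁, a ≤ y) : rowInsert y (r₁ ++ b :: r₂) = (r₁ ++ y :: r₂, some b) := by
  induction r₁ with
  | nil => simp [rowInsert, hb]
  | cons a t ih =>
    rw [List.forall_mem_cons] at h
    simp only [List.cons_append, rowInsert, if_neg (not_lt.2 h.1), ih h.2]

lemma dropFirstRow_append_singleton (y : ℝ) (C : List (List ℝ)) :
    dropFirstRow (C ++ [[y]]) = dropFirstRow C := by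
  induction C with
  | nil => simp [dropFirstRow]
  | cons c C ih => simp only [List.cons_append, dropFirstRow, ih]

lemma dropFirstRow_append {C₁ : List (List ℝ)} (h : ∀ d ∈ C₁, d.tail ≠ []) (C₂ : List (List ℝ)) :
    dropFirstRow (C₁ ++ C₂) = C₁.map List.tail ++ dropFirstRow C₂ := by
  induction C₁ with
  | nil => rfl
  | cons d D ih =>
    rw [List.forall_mem_cons] at h
    simp only [List.cons_append, dropFirstRow, if_neg h.1, ih h.2, List.map_cons]

lemma exists_tail_eq_of_mem_dropFirstRow {C : List (List ℝ)} {d : List ℝ}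
    (hd : d ∈ dropFirstRow C) : ∃ e ∈ C, e.tail = d := by
  induction C with
  | nil => simp [dropFirstRow] at hd
  | cons c C ih =>
    by_cases hc : c.tail = []
    · simp [dropFirstRow, hc] at hd
    · simp only [dropFirstRow, if_neg hc, List.mem_cons] at hd
      rcases hd with rfl | hd
      · exact ⟨c, List.mem_cons_self, rfl⟩
      · obtain ⟨e, he, h⟩ := ih hd
        exact ⟨e, List.mem_cons_of_mem c he, h⟩

lemma NestedColumns.dropFirstRow {C : List (List ℝ)} (hC : NestedColumns C) :
    NestedColumns (dropFirstRow C) := by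
  induction C with
  | nil => exact hC
  | cons c C ih =>
    by_cases hc : c.tail = []
    · simp only [PaperStmt.dropFirstRow, if_pos hc]
      exact ⟨by simp, by simp, List.Pairwise.nil⟩
    simp only [PaperStmt.dropFirstRow, if_neg hc]
    obtain ⟨hne, hsort, hsub⟩ := hC
    rw [List.pairwise_cons] at hsub
    have hcs := hsort c List.mem_cons_self
    obtain ⟨ihne, ihsort, ihsub⟩ := ih ⟨fun d hd => hne d (List.mem_cons_of_mem c hd),
      fun d hd => hsort d (List.mem_cons_of_mem c hd), hsub.2⟩
    refine ⟨List.forall_mem_cons.2 ⟨hc, ihne⟩, List.forall_mem_cons.2 ⟨hcs.tail, ihsort⟩,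
      List.pairwise_cons.2 ⟨fun d hd => ?_, ihsub⟩⟩
    obtain ⟨e, he, rfl⟩ := exists_tail_eq_of_mem_dropFirstRow hd
    have he' := List.mem_cons_of_mem c he
    exact tail_subset_tail hcs (hsort e he') (hsub.1 e he) (hne e he')

theorem HasColumns.insertT_of_forall_headI_le {T C : List (List ℝ)} (h : HasColumns T C) {y : ℝ}
    (hy : ∀ d ∈ C, d.headI ≤ y) :
    HasColumns (insertT T y) (C ++ [[y]]) ∧
      (insertT T y).map List.length = addCell (T.map List.length) 0 := by
  cases h with
  | nil => exact ⟨HasColumns.cons (C := [[y]]) (by simp) HasColumns.nil, rfl⟩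
  | @cons T C hC h =>
    have hrow : rowInsert y (C.map List.headI) = (C.map List.headI ++ [y], none) :=
      rowInsert_of_forall_le (by simpa using hy)
    have hins : insertT (C.map List.headI :: T) y = (C ++ [[y]]).map List.headI :: T := by
      simp [insertT, hrow]
    rw [hins]
    refine ⟨HasColumns.cons (by simp) ?_, by simp [addCell]⟩
    rwa [dropFirstRow_append_singleton]

lemma insertT_map_headI_append_cons {C₁ C₂ : List (List ℝ)} {a y : ℝ} {t : List ℝ}
    (hC₁ : ∀ d ∈ C₁, d.headI ≤ y) (hya : y < a) (T : List (List ℝ)) :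
    insertT ((C₁ ++ (a :: t) :: C₂).map List.headI :: T) y =
      (C₁ ++ (y :: a :: t) :: C₂).map List.headI :: insertT T a := by
  have hrow : rowInsert y (C₁.map List.headI ++ a :: C₂.map List.headI) =
      (C₁.map List.headI ++ y :: C₂.map List.headI, some a) :=
    rowInsert_append_cons hya _ (by simpa using hC₁)
  simp only [insertT, List.map_append, List.map_cons, List.headI_cons, hrow]

lemma dropFirstRow_eq_nil_of_forall_subset_singleton {C : List (List ℝ)} {a : ℝ}
    (hC : ∀ d ∈ C, d.Nodup ∧ d ⊆ [a]) : dropFirstRow C = [] := by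
  rcases C with _ | ⟨d, D⟩
  · rfl
  obtain ⟨hnd, hd⟩ := hC d List.mem_cons_self
  have hlen := (List.subperm_of_subset hnd hd).length_le
  have hdt : d.tail = [] := List.eq_nil_of_length_eq_zero (by simp at hlen ⊢; omega)
  simp [dropFirstRow, hdt]

theorem HasColumns.insertT_bump {T C : List (List ℝ)} (h : HasColumns T C) (hC : NestedColumns C)
    {C₁ C₂ : List (List ℝ)} {c : List ℝ} {y : ℝ} (hsplit : C = C₁ ++ c :: C₂)
    (hC₁ : ∀ d ∈ C₁, y ∈ d) (hc : y < c.headI) :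
    HasColumns (insertT T y) (C₁ ++ (y :: c) :: C₂) ∧
      (insertT T y).map List.length = addCell (T.map List.length) c.length := by
  induction h generalizing C₁ C₂ c y with
  | nil => simp at hsplit
  | @cons T C hCne h ih =>
    subst hsplit
    obtain ⟨a, t, rfl⟩ := List.exists_cons_of_ne_nil (hC.ne_nil c (by simp))
    rw [List.headI_cons] at hc
    have hsorted : ∀ d ∈ C₁, d.Pairwise (· < ·) := fun d hd => hC.sorted d (by simp [hd])
    have hsub := List.pairwise_append.1 hC.subset
    have ha : ∀ d ∈ C₁, a ∈ d.tail := fun d hd =>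
      mem_tail_of_headI_lt (hsub.2.2 d hd _ List.mem_cons_self List.mem_cons_self)
        ((headI_le_of_mem (hsorted d hd) (hC₁ d hd)).trans_lt hc)
    have htail : ∀ d ∈ C₁, d.tail ≠ [] := fun d hd => List.ne_nil_of_mem (ha d hd)
    have hdrop : dropFirstRow (C₁ ++ (a :: t) :: C₂) =
        C₁.map List.tail ++ dropFirstRow ((a :: t) :: C₂) := dropFirstRow_append htail _
    have hdrop' : dropFirstRow (C₁ ++ (y :: a :: t) :: C₂) =
        C₁.map List.tail ++ (a :: t) :: dropFirstRow C₂ := by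
      simp [dropFirstRow_append htail, dropFirstRow]
    have hC₁' : ∀ d ∈ C₁.map List.tail, a ∈ d := by simpa using ha
    rw [insertT_map_headI_append_cons (fun d hd => headI_le_of_mem (hsorted d hd) (hC₁ d hd)) hc]
    rcases t with _ | ⟨b, t⟩
    · have hC₂ : dropFirstRow C₂ = [] := dropFirstRow_eq_nil_of_forall_subset_singleton
        fun d hd => ⟨(hC.sorted d (by simp [hd])).nodup, (List.pairwise_cons.1 hsub.2.1).1 d hd⟩
      rw [hdrop, show dropFirstRow ([a] :: C₂) = [] by simp [dropFirstRow], List.append_nil] at h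
      obtain ⟨hT, hlen⟩ := h.insertT_of_forall_headI_le fun d hd => by
        obtain ⟨e, he, rfl⟩ := List.mem_map.1 hd
        exact headI_le_of_mem (hsorted e he).tail (ha e he)
      refine ⟨HasColumns.cons (by simp) ?_, by simp [hlen, addCell]⟩
      rwa [hdrop', hC₂]
    · have hdrop₂ : dropFirstRow (C₁ ++ (a :: b :: t) :: C₂) =
          C₁.map List.tail ++ (b :: t) :: dropFirstRow C₂ := by
        simp [hdrop, dropFirstRow]
      have hab : a < b :=
        List.rel_of_pairwise_cons (hC.sorted (a :: b :: t) (by simp)) List.mem_cons_self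
      obtain ⟨hT, hlen⟩ := ih hC.dropFirstRow hdrop₂ hC₁' hab
      refine ⟨HasColumns.cons (by simp) ?_, by simp [hlen, addCell]⟩
      rwa [hdrop']

def addToColumn (C : List (List ℝ)) (m : ℕ) (x : ℝ) : List (List ℝ) :=
  C.take m ++ (x :: C.getD m []) :: C.drop (m + 1)

lemma getD_addToColumn {C : List (List ℝ)} {m : ℕ} (hm : m ≤ C.length) (x : ℝ) (k : ℕ) :
    (addToColumn C m x).getD k [] = if k = m then x :: C.getD m [] else C.getD k [] := by
  have htake : (C.take m).length = m := List.length_take_of_le hm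
  simp only [addToColumn, List.getD_eq_getElem?_getD]
  rcases lt_trichotomy k m with hk | rfl | hk
  · rw [List.getElem?_append_left (by omega), List.getElem?_take_of_lt hk, if_neg hk.ne]
  · simp [htake]
  · rw [List.getElem?_append_right (by omega), htake, if_neg hk.ne',
      show k - m = (k - m - 1) + 1 by omega, List.getElem?_cons_succ, List.getElem?_drop]
    congr 2
    omega

lemma mem_addToColumn {C : List (List ℝ)} {m : ℕ} {x : ℝ} {d : List ℝ}
    (hd : d ∈ addToColumn C m x) : d = x :: C.getD m [] ∨ d ∈ C := by
  rcases List.mem_append.1 hd with hd | hd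
  · exact Or.inr (List.take_subset _ _ hd)
  · rcases List.mem_cons.1 hd with rfl | hd
    · exact Or.inl rfl
    · exact Or.inr (List.drop_subset _ _ hd)

/-- An entry not exceeding any entry of the tableau goes on top of the first column `m` that does
not contain it. -/
theorem HasColumns.insertT_of_forall_le {T C : List (List ℝ)} (h : HasColumns T C)
    (hC : NestedColumns C) {x : ℝ} {m : ℕ} (hx : ∀ d ∈ C, ∀ v ∈ d, x ≤ v) (hm : m ≤ C.length)
    (hin : ∀ d ∈ C.take m, x ∈ d) (hout : x ∉ C.getD m []) :
    HasColumns (insertT T x) (addToColumn C m x) ∧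
      (insertT T x).map List.length = addCell (T.map List.length) (C.getD m []).length := by
  rcases hm.lt_or_eq with hm | rfl
  · set c := C.getD m []
    have hc : c = C[m] := List.getD_eq_getElem _ _ hm
    have hcC : c ∈ C := hc ▸ List.getElem_mem hm
    have hsplit : C = C.take m ++ c :: C.drop (m + 1) := by
      rw [hc, ← List.drop_eq_getElem_cons hm, List.take_append_drop]
    have hxc : x < c.headI := (hx c hcC _ (headI_mem (hC.ne_nil c hcC))).lt_of_ne
      fun h => hout (h ▸ headI_mem (hC.ne_nil c hcC))
    exact h.insertT_bump hC hsplit hin hxc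
  · have hC' : addToColumn C C.length x = C ++ [[x]] := by
      simp [addToColumn]
    rw [hC', List.getD_eq_default _ _ le_rfl]
    rw [List.take_length] at hin
    exact h.insertT_of_forall_headI_le fun d hd => headI_le_of_mem (hC.sorted d hd) (hin d hd)

section Multiplicities

variable {α : Type*} [DecidableEq α]

def multiplicities (l : List α) : Multiset ℕ := (l.dedup.map l.count : List ℕ)

lemma zero_notMem_multiplicities (l : List α) : 0 ∉ multiplicities l := by
  simp [multiplicities, List.count_eq_zero]

lemma count_eq_zero_or_mem_multiplicities (l : List α) (x : α) :
    l.count x = 0 ∨ l.count x ∈ multiplicities l := by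
  by_cases hx : x ∈ l
  · exact Or.inr (by simpa [multiplicities] using ⟨x, hx, rfl⟩)
  · exact Or.inl (List.count_eq_zero.2 hx)

lemma multiplicities_eq (l : List α) :
    multiplicities l = (l : Multiset α).dedup.map fun v => (l : Multiset α).count v := by
  simp [multiplicities]

lemma multiplicities_append_singleton (l : List α) (x : α) :
    multiplicities (l ++ [x]) = (l.count x + 1) ::ₘ (multiplicities l).erase (l.count x) := by
  have hcoe : ((l ++ [x] : List α) : Multiset α) = x ::ₘ l := by simp
  rw [multiplicities_eq, multiplicities_eq, hcoe, ← Multiset.coe_count]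
  set s : Multiset α := (l : Multiset α)
  by_cases hx : x ∈ s
  · rw [Multiset.dedup_cons_of_mem hx, ← Multiset.cons_erase (Multiset.mem_dedup.2 hx),
      Multiset.map_cons, Multiset.map_cons, Multiset.erase_cons_head, Multiset.count_cons_self]
    congr 1
    refine Multiset.map_congr rfl fun v hv => Multiset.count_cons_of_ne ?_ s
    exact fun h => ((Multiset.nodup_dedup s).mem_erase_iff.1 (h ▸ hv)).1 rfl
  · rw [Multiset.dedup_cons_of_notMem hx, Multiset.map_cons, Multiset.count_cons_self,
      Multiset.count_eq_zero.2 hx, Multiset.erase_of_notMem]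
    · congr 1
      exact Multiset.map_congr rfl fun v hv =>
        Multiset.count_cons_of_ne (fun h => hx (Multiset.mem_dedup.1 (h ▸ hv))) s
    · exact multiplicities_eq l ▸ zero_notMem_multiplicities l

end Multiplicities

lemma pairwise_sortDesc (Q : Multiset ℕ) : (sortDesc Q).Pairwise (· ≥ ·) := by
  simp [sortDesc, List.pairwise_reverse]

lemma coe_sortDesc (Q : Multiset ℕ) : (sortDesc Q : Multiset ℕ) = Q := by
  rw [sortDesc, Multiset.coe_reverse, Multiset.sort_eq]

lemma sortDesc_eq_of_pairwise {Q : Multiset ℕ} {t : List ℕ} (ht : t.Pairwise (· ≥ ·))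
    (hQ : (t : Multiset ℕ) = Q) : sortDesc Q = t := by
  rw [sortDesc, List.reverse_eq_iff]
  refine List.Perm.eq_of_pairwise' (Multiset.pairwise_sort Q _) (List.pairwise_reverse.2 ht) ?_
  rw [← Multiset.coe_eq_coe, Multiset.coe_reverse, hQ, Multiset.sort_eq]

lemma sortDesc_cons_of_forall_le {Q : Multiset ℕ} {a : ℕ} (h : ∀ b ∈ Q, b ≤ a) :
    sortDesc (a ::ₘ Q) = a :: sortDesc Q := by
  refine sortDesc_eq_of_pairwise (List.pairwise_cons.2 ⟨fun b hb => ?_, pairwise_sortDesc Q⟩) ?_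
  · exact h b (by rwa [← coe_sortDesc Q, Multiset.mem_coe])
  · rw [← Multiset.cons_coe, coe_sortDesc]

lemma sortDesc_cons_succ_erase_of_pairwise {s : List ℕ} (hs : s.Pairwise (· ≥ ·)) (h0 : 0 ∉ s)
    {m : ℕ} (hm : m = 0 ∨ m ∈ s) :
    sortDesc ((m + 1) ::ₘ (s : Multiset ℕ).erase m) = addCell s (s.countP (m < ·)) := by
  induction s with
  | nil =>
    obtain rfl : m = 0 := by simpa using hm
    exact sortDesc_eq_of_pairwise (List.pairwise_singleton _ _) rfl
  | cons a s ih =>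
    rw [List.pairwise_cons] at hs
    rw [List.mem_cons, not_or] at h0
    by_cases hma : m < a
    · have hm' : m = 0 ∨ m ∈ s := by
        rcases hm with hm | hm
        · exact Or.inl hm
        · exact Or.inr ((List.mem_cons.1 hm).resolve_left hma.ne)
      have hle : ∀ b ∈ (m + 1) ::ₘ (s : Multiset ℕ).erase m, b ≤ a := by
        simp only [Multiset.mem_cons]
        rintro b (rfl | hb)
        exacts [hma, hs.1 b (Multiset.mem_of_mem_erase hb)]
      rw [← Multiset.cons_coe, Multiset.erase_cons_tail _ hma.ne', Multiset.cons_swap,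
        sortDesc_cons_of_forall_le hle, ih hs.2 h0.2 hm',
        List.countP_cons_of_pos (by simpa using hma)]
      rfl
    · obtain rfl : m = a := by
        rcases hm with rfl | hm
        · omega
        · exact (List.mem_cons.1 hm).elim id fun h => (hs.1 m h).antisymm (not_lt.1 hma)
      rw [← Multiset.cons_coe, Multiset.erase_cons_head,
        sortDesc_cons_of_forall_le fun b hb => (hs.1 b hb).trans m.le_succ,
        sortDesc_eq_of_pairwise hs.2 rfl, List.countP_eq_zero.2]
      · rfl
      · simp only [List.mem_cons, decide_eq_true_eq, not_lt]
        rintro b (rfl | hb)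
        exacts [le_rfl, hs.1 b hb]

lemma sortDesc_cons_succ_erase {Q : Multiset ℕ} (h0 : 0 ∉ Q) {m : ℕ} (hm : m = 0 ∨ m ∈ Q) :
    sortDesc ((m + 1) ::ₘ Q.erase m) = addCell (sortDesc Q) (Q.countP (m < ·)) := by
  have h := sortDesc_cons_succ_erase_of_pairwise (pairwise_sortDesc Q)
    (by rwa [← Multiset.mem_coe, coe_sortDesc]) (by rwa [← Multiset.mem_coe, coe_sortDesc])
  rwa [coe_sortDesc, ← Multiset.coe_countP, coe_sortDesc] at h

lemma pairwise_superset_of_forall_mem_getD_iff {α : Type*} {C : List (List α)} {p : ℕ → α → Prop}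
    (hp : ∀ k v, v ∈ C.getD k [] ↔ p k v) (hmono : ∀ i j v, i < j → p j v → p i v) :
    C.Pairwise fun a b => b ⊆ a := by
  rw [List.pairwise_iff_getElem]
  intro i j hi hj hij v hv
  rw [← List.getD_eq_getElem _ [] hj, hp] at hv
  rw [← List.getD_eq_getElem _ [] hi, hp]
  exact hmono i j v hij hv

lemma NestedColumns.sorted_getD {C : List (List ℝ)} (hC : NestedColumns C) (k : ℕ) :
    (C.getD k []).Pairwise (· < ·) := by
  rcases lt_or_ge k C.length with hk | hk
  · rw [List.getD_eq_getElem _ _ hk]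
    exact hC.sorted _ (List.getElem_mem hk)
  · rw [List.getD_eq_default _ _ hk]
    exact List.Pairwise.nil

structure IsRSColumns (l : List ℝ) (C : List (List ℝ)) : Prop where
  hasColumns : HasColumns (RS l) C
  nested : NestedColumns C
  mem_iff : ∀ k v, v ∈ C.getD k [] ↔ v ∈ l ∧ k < l.count v

namespace IsRSColumns

variable {l : List ℝ} {C : List (List ℝ)}

lemma mem_of_mem (h : IsRSColumns l C) {d : List ℝ} (hd : d ∈ C) {v : ℝ} (hv : v ∈ d) :
    v ∈ l := by
  obtain ⟨k, hk, rfl⟩ := List.mem_iff_getElem.1 hd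
  exact ((h.mem_iff k v).1 (by rwa [List.getD_eq_getElem _ _ hk])).1

lemma count_le_length (h : IsRSColumns l C) (x : ℝ) : l.count x ≤ C.length := by
  by_contra hlt
  have hx := (h.mem_iff (l.count x - 1) x).2 ⟨List.count_pos_iff.1 (by omega), by omega⟩
  rw [List.getD_eq_default _ _ (by omega)] at hx
  exact List.not_mem_nil hx

lemma mem_of_mem_take (h : IsRSColumns l C) {x : ℝ} {d : List ℝ} (hd : d ∈ C.take (l.count x)) :
    x ∈ d := by
  obtain ⟨k, hk, rfl⟩ := List.mem_iff_getElem.1 hd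
  rw [List.length_take] at hk
  rw [List.getElem_take, ← List.getD_eq_getElem _ []]
  exact (h.mem_iff k x).2 ⟨List.count_pos_iff.1 (by omega), by omega⟩

lemma length_getD (h : IsRSColumns l C) (k : ℕ) :
    (C.getD k []).length = (multiplicities l).countP (k < ·) := by
  have hnodup : (C.getD k []).Nodup := (h.nested.sorted_getD k).nodup
  have hperm : (C.getD k []).Perm (l.dedup.filter (k < l.count ·)) :=
    (List.perm_ext_iff_of_nodup hnodup ((List.nodup_dedup l).filter _)).2 fun v => by
      rw [h.mem_iff]
      simp
  rw [hperm.length_eq, multiplicities, Multiset.coe_countP, List.countP_map,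
    List.countP_eq_length_filter]
  rfl

lemma insertT (h : IsRSColumns l C) {x : ℝ} (hx : ∀ v ∈ l, x ≤ v) :
    HasColumns (insertT (RS l) x) (addToColumn C (l.count x) x) ∧
      (insertT (RS l) x).map List.length = addCell (RSshape l) (C.getD (l.count x) []).length :=
  h.hasColumns.insertT_of_forall_le h.nested (fun _ hd v hv => hx v (h.mem_of_mem hd hv))
    (h.count_le_length x) (fun _ hd => h.mem_of_mem_take hd)
    (fun hx' => lt_irrefl _ ((h.mem_iff _ x).1 hx').2)

lemma RSshape_append (h : IsRSColumns l C) {x : ℝ} (hx : ∀ v ∈ l, x ≤ v) :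
    RSshape (l ++ [x]) = addCell (RSshape l) ((multiplicities l).countP (l.count x < ·)) := by
  rw [← h.length_getD, ← (h.insertT hx).2, RSshape, RS, List.foldl_append]
  rfl

lemma mem_getD_addToColumn_iff (h : IsRSColumns l C) (x : ℝ) (k : ℕ) (v : ℝ) :
    v ∈ (addToColumn C (l.count x) x).getD k [] ↔ v ∈ l ++ [x] ∧ k < (l ++ [x]).count v := by
  have hcount : (l ++ [x]).count v = l.count v + if v = x then 1 else 0 := by
    rw [List.count_append]
    split_ifs with hv <;> simp [hv, Ne.symm]
  rw [getD_addToColumn (h.count_le_length x), hcount, List.mem_append, List.mem_singleton]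
  by_cases hv : v = x
  · subst hv
    rw [if_pos rfl]
    by_cases hk : k = l.count v
    · simp [hk]
    · rw [if_neg hk, h.mem_iff]
      constructor
      · rintro ⟨-, hlt⟩
        exact ⟨Or.inr rfl, by omega⟩
      · rintro ⟨-, hlt⟩
        exact ⟨List.count_pos_iff.1 (by omega), by omega⟩
  · rw [if_neg hv]
    split_ifs with hk
    · rw [List.mem_cons, h.mem_iff]
      simp [hv, hk]
    · rw [h.mem_iff]
      simp [hv]

lemma append (h : IsRSColumns l C) {x : ℝ} (hx : ∀ v ∈ l, x ≤ v) :
    IsRSColumns (l ++ [x]) (addToColumn C (l.count x) x) := by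
  have hmem := h.mem_getD_addToColumn_iff x
  refine ⟨?_, ⟨fun d hd => ?_, fun d hd => ?_, ?_⟩, hmem⟩
  · rw [RS, List.foldl_append]
    exact (h.insertT hx).1
  · rcases mem_addToColumn hd with rfl | hd
    exacts [List.cons_ne_nil _ _, h.nested.ne_nil d hd]
  · rcases mem_addToColumn hd with rfl | hd
    · refine List.pairwise_cons.2 ⟨fun v hv => ?_, h.nested.sorted_getD _⟩
      have hvl := (h.mem_iff _ v).1 hv
      exact (hx v hvl.1).lt_of_ne fun hxv => lt_irrefl _ (hxv ▸ hvl.2)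
    · exact h.nested.sorted d hd
  · exact pairwise_superset_of_forall_mem_getD_iff hmem fun _ _ _ hij hv =>
      ⟨hv.1, hij.trans hv.2⟩

end IsRSColumns

lemma exists_isRSColumns {l : List ℝ} (hl : l.Pairwise (· ≥ ·)) : ∃ C, IsRSColumns l C := by
  induction l using List.reverseRecOn with
  | nil => exact ⟨[], HasColumns.nil, ⟨by simp, by simp, List.Pairwise.nil⟩, by simp⟩
  | append_singleton l x ih =>
    rw [List.pairwise_append] at hl
    obtain ⟨C, hC⟩ := ih hl.1
    exact ⟨_, hC.append fun v hv => hl.2.2 v hv x (List.mem_singleton_self x)⟩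

/-- for a non-increasing sequence `λ`, the shape of its
Robinson–Schensted tableau is the partition obtained by sorting the multiplicities of the
distinct values of `λ` in non-increasing order. -/
theorem RSshape_of_antitone (l : List ℝ) (hl : l.Pairwise (· ≥ ·)) :
    RSshape l = sortDesc ((l.dedup.map (fun x => l.count x) : List ℕ) : Multiset ℕ) := by
  induction l using List.reverseRecOn with
  | nil => simp [RSshape, RS, sortDesc]
  | append_singleton l x ih =>
    rw [List.pairwise_append] at hl
    obtain ⟨C, hC⟩ := exists_isRSColumns hl.1
    change _ = sortDesc (multiplicities (l ++ [x]))
    rw [hC.RSshape_append fun v hv => hl.2.2 v hv x (List.mem_singleton_self x), ih hl.1,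
      multiplicities_append_singleton]
    exact (sortDesc_cons_succ_erase (zero_notMem_multiplicities l)
      (count_eq_zero_or_mem_multiplicities l x)).symm

end PaperStmt
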